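/- arXiv:0805.4049 — 2 statements merged into one kernel-verified Lean document; each statement's English description precedes it below -/
import Mathlib

section
/- Let Σ be a finite nonempty alphabet and n ≥ 1 an integer. Suppose S is a set of words over Σ satisfying Σ^{n+1} ⊆ S ⊆ Σ^n ∪ Σ^{n+1} (S contains all words of length n+1, and every word of S has length n or n+1). Then the Kleene star S* is co-finite if and only if S contains every word of length n (i.e., Σ^n ⊆ S). -/
open Computability

/-! If all words of lengths `n` and `n + 1` lie in `S`, then so do all words whose length lies in
the additive monoid generated by `n` and `n + 1`; since `gcd(n, n + 1) = 1`, this monoid contains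
every large integer. Conversely, if a word `w` of length `n` is missing from `S`, then in any
factorisation of `w c w c ⋯ c w` into words of `S` the first factor must be `w c`, so by induction
none of these arbitrarily long words lies in `S∗`. -/

theorem Set.infinite_of_forall_exists_apply_lt {α β : Type*} [LinearOrder β] {s : Set α}
    (g : α → β) (hne : s.Nonempty) (h : ∀ x ∈ s, ∃ y ∈ s, g x < g y) : s.Infinite := by
  intro hfin
  obtain ⟨x, hx, hmax⟩ := Set.exists_max_image s g hfin hne
  obtain ⟨y, hy, hlt⟩ := h x hx
  exact (hmax y hy).not_gt hlt

theorem Nat.exists_mem_closure_pair_succ_of_ge (n : ℕ) :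
    ∃ N, ∀ m ≥ N, m ∈ AddSubmonoid.closure ({n, n + 1} : Set ℕ) := by
  have hgcd : setGcd {n, n + 1} ∣ 1 :=
    (Nat.dvd_add_right (setGcd_dvd_of_mem (n := n) (by simp))).mp
      (setGcd_dvd_of_mem (n := n + 1) (by simp))
  obtain ⟨N, hN⟩ := exists_mem_closure_of_ge (s := {n, n + 1})
  exact ⟨N, fun m hm => hN m hm (hgcd.trans (one_dvd m))⟩

namespace Language

variable {α : Type*} {l : Language α}

theorem append_mem_kstar {x y : List α} (hx : x ∈ l∗) (hy : y ∈ l∗) : x ++ y ∈ l∗ :=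
  kstar_mul_kstar l ▸ append_mem_mul hx hy

theorem exists_append_of_mem_kstar {x : List α} (hx : x ∈ l∗) (hne : x ≠ []) :
    ∃ y ∈ l, ∃ z ∈ l∗, x = y ++ z := by
  rw [← one_add_self_mul_kstar_eq_kstar, mem_add, mem_one, mem_mul] at hx
  obtain hx | ⟨y, hy, z, hz, rfl⟩ := hx
  · exact absurd hx hne
  · exact ⟨y, hy, z, hz, rfl⟩

theorem mem_kstar_of_length_mem_closure {s : Set ℕ}
    (hs : ∀ k ∈ s, ∀ x : List α, x.length = k → x ∈ l) {x : List α}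
    (hx : x.length ∈ AddSubmonoid.closure s) : x ∈ l∗ := by
  generalize hxm : x.length = m at hx
  induction hx using AddSubmonoid.closure_induction generalizing x with
  | mem k hk => exact (le_kstar : l ≤ l∗) (hs k hk x hxm)
  | zero => exact List.length_eq_zero_iff.mp hxm ▸ nil_mem_kstar l
  | add a b _ _ iha ihb =>
    rw [← List.take_append_drop a x]
    exact append_mem_kstar (iha (by simp; omega)) (ihb (by simp; omega))

section TwoLengths

variable {n : ℕ} (hl : ∀ y ∈ l, y.length = n ∨ y.length = n + 1)
  {w : List α} (hw : w.length = n) (hwl : w ∉ l)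
include hl hw hwl

theorem notMem_kstar_of_length_eq (hne : w ≠ []) : w ∉ l∗ := by
  intro hwk
  obtain ⟨y, hy, z, -, hyz⟩ := exists_append_of_mem_kstar hwk hne
  have hlen : y.length = n := by
    have hsum := congrArg List.length hyz
    rcases hl y hy with h | h <;> simp at hsum <;> omega
  have hyw : y = w := (List.append_inj (hyz.symm.trans (List.append_nil w).symm) (by omega)).1
  exact hwl (hyw ▸ hy)

theorem append_cons_notMem_kstar (c : α) {v : List α} (hv : v ∉ l∗) :
    w ++ c :: v ∉ l∗ := by
  intro hk
  obtain ⟨y, hy, z, hz, hyz⟩ := exists_append_of_mem_kstar hk (by simp)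
  rcases hl y hy with h | h
  · exact hwl ((List.append_inj hyz (by omega)).1 ▸ hy)
  · rw [← List.singleton_append, ← List.append_assoc] at hyz
    exact hv ((List.append_inj hyz (by simp; omega)).2 ▸ hz)

end TwoLengths

end Language

/-- For `Σ^{n+1} ⊆ S ⊆ Σ^n ∪ Σ^{n+1}`, the star `S∗` is co-finite
if and only if `Σ^n ⊆ S`. -/
theorem star_cofinite_iff_contains_length_n {α : Type*} [Fintype α] [Nonempty α] {n : ℕ}
    (hn : 1 ≤ n) (S : Language α)
    (hsub : ∀ w : List α, w.length = n + 1 → w ∈ S)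
    (hsup : ∀ w ∈ S, w.length = n ∨ w.length = n + 1) :
    {w : List α | w ∉ S∗}.Finite ↔ ∀ w : List α, w.length = n → w ∈ S := by
  constructor
  · intro hfin w hw
    by_contra hwS
    obtain ⟨c⟩ := ‹Nonempty α›
    have hw₀ : w ≠ [] := by rintro rfl; simp at hw; omega
    refine Set.infinite_of_forall_exists_apply_lt List.length
      ⟨w, Language.notMem_kstar_of_length_eq hsup hw hwS hw₀⟩ (fun v hv => ?_) hfin
    exact ⟨w ++ c :: v, Language.append_cons_notMem_kstar hsup hw hwS c hv, by simp; omega⟩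
  · intro hall
    obtain ⟨N, hN⟩ := Nat.exists_mem_closure_pair_succ_of_ge n
    refine (List.finite_length_lt α N).subset fun x hx => ?_
    by_contra hlt
    refine hx (Language.mem_kstar_of_length_mem_closure ?_ (hN _ (not_lt.mp hlt)))
    rintro k (rfl | rfl)
    exacts [hall, hsub]
end

section
/- Consider a 3SAT instance over n ≥ 1 Boolean variables indexed by Fin n, consisting of m clauses c_1, …, c_m, where each clause is a triple of literals and a literal is a pair (i, b) ∈ Fin n × Bool, meaning variable i must take value b. An assignment f : Fin n → Bool satisfies a clause if it agrees with at least one of its three literals, and the instance is satisfiable if some assignment satisfies every clause. For each clause c, let F_c be the set of words w over the alphabet Bool of length n such that the assignment i ↦ (i-th letter of w) falsifies c (agrees with none of the three literals of c). Let S = (F_{c_1} ∪ ⋯ ∪ F_{c_m}) ∪ Bool^{n+1}, where Bool^{n+1} is the set of all words over Bool of length n+1. Then the 3SAT instance is satisfiable if and only if the Kleene star S* is NOT co-finite. -/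
open Computability

/-- A literal over `n` variables: a variable index and the Boolean value it demands. -/
abbrev Literal (n : ℕ) := Fin n × Bool

/-- A 3SAT clause: a triple of literals. -/
abbrev Clause (n : ℕ) := Literal n × Literal n × Literal n

/-- An assignment satisfies a clause if it agrees with at least one of its three literals. -/
def SatisfiesClause {n : ℕ} (f : Fin n → Bool) (c : Clause n) : Prop :=
  f c.1.1 = c.1.2 ∨ f c.2.1.1 = c.2.1.2 ∨ f c.2.2.1 = c.2.2.2

/-- The words of length `n` over `Bool` whose induced assignment falsifies clause `c`. -/
def falsifyingWords {n : ℕ} (c : Clause n) : Language Bool :=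
  {w : List Bool | ∃ h : w.length = n,
    ¬ SatisfiesClause (fun i : Fin n => w.get (Fin.cast h.symm i)) c}

/-!
If `f` satisfies every clause, the word `w` spelling out `f` lies outside `S`, and since all words
of `S` have length `n` or `n + 1`, a factorisation of `w ++ a :: u` into words of `S` must begin
with `w` (impossible) or with `w ++ [a]`; so `w`, `w ++ a :: w`, `w ++ a :: w ++ a :: w`, … are
infinitely many words outside `S∗`. If no `f` does, every word of length `n` or `n + 1` lies in
`S`, hence every word whose length is a sum of `n`s and `(n + 1)`s lies in `S∗`, and every length
`k ≥ n * n` is such a sum: `k = (q - r) * n + r * (n + 1)` for `k = q * n + r`, `r < n ≤ q`.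
-/

theorem Nat.mem_closure_pair_succ_of_mul_le {n k : ℕ} (hk : n * n ≤ k) :
    k ∈ AddSubmonoid.closure {n, n + 1} := by
  rw [AddSubmonoid.mem_closure_pair]
  rcases Nat.eq_zero_or_pos n with rfl | hn
  · exact ⟨0, k, by simp⟩
  have hq : n ≤ k / n := (Nat.le_div_iff_mul_le hn).2 hk
  have hr : k % n < n := Nat.mod_lt k hn
  refine ⟨k / n - k % n, k % n, ?_⟩
  have hdiv := Nat.div_add_mod' k n
  have hmul : k % n * n ≤ k / n * n := Nat.mul_le_mul_right n (by omega)
  simp only [smul_eq_mul, Nat.sub_mul, Nat.mul_succ]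
  omega

namespace Language

variable {α : Type*} {S : Language α}

theorem exists_mem_append_mem_kstar_of_mem_kstar {x : List α} (hx : x ∈ S∗) (hne : x ≠ []) :
    ∃ y ∈ S, ∃ z ∈ S∗, y ++ z = x := by
  rw [← one_add_self_mul_kstar_eq_kstar, mem_add, mem_one] at hx
  exact hx.resolve_left hne

section TwoLengths

variable {n : ℕ} (hS : ∀ y ∈ S, y.length = n ∨ y.length = n + 1)
include hS

theorem notMem_kstar_of_length_eq_s5 {w : List α} (hn : 0 < n) (hw : w.length = n) (hwS : w ∉ S) :
    w ∉ S∗ := by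
  intro hx
  obtain ⟨y, hy, z, -, hyz⟩ :=
    exists_mem_append_mem_kstar_of_mem_kstar hx (List.ne_nil_of_length_pos (hw ▸ hn))
  have hlen := congrArg List.length hyz
  rw [List.length_append] at hlen
  rcases hS y hy with hyn | hyn
  · have hz : z = [] := List.eq_nil_of_length_eq_zero (by omega)
    rw [hz, List.append_nil] at hyz
    exact hwS (hyz ▸ hy)
  · omega

theorem append_cons_notMem_kstar_s5 {w u : List α} (hw : w.length = n) (hwS : w ∉ S) (a : α)
    (hu : u ∉ S∗) : w ++ a :: u ∉ S∗ := by
  intro hx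
  obtain ⟨y, hy, z, hz, hyz⟩ := exists_mem_append_mem_kstar_of_mem_kstar hx (by simp)
  rcases hS y hy with hyn | hyn
  · exact hwS ((List.append_inj hyz (hyn.trans hw.symm)).1 ▸ hy)
  · rw [← List.singleton_append, ← List.append_assoc] at hyz
    exact hu ((List.append_inj hyz (by simp [hyn, hw])).2 ▸ hz)

theorem infinite_setOf_notMem_kstar {w : List α} (hn : 0 < n) (hw : w.length = n)
    (hwS : w ∉ S) : {x | x ∉ S∗}.Infinite := by
  obtain ⟨a, -⟩ := List.exists_mem_of_length_pos (hw ▸ hn)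
  have long : ∀ k : ℕ, ∃ x ∉ S∗, k < x.length := by
    intro k
    induction k with
    | zero => exact ⟨w, notMem_kstar_of_length_eq_s5 hS hn hw hwS, by omega⟩
    | succ k ih =>
      obtain ⟨x, hx, hk⟩ := ih
      exact ⟨w ++ a :: x, append_cons_notMem_kstar_s5 hS hw hwS a hx, by simp; omega⟩
  refine Set.Infinite.of_image List.length (Set.infinite_of_forall_exists_gt fun k => ?_)
  obtain ⟨x, hx, hk⟩ := long k
  exact ⟨x.length, Set.mem_image_of_mem _ hx, hk⟩

end TwoLengths

def kstarFullLengths (S : Language α) : AddSubmonoid ℕ where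
  carrier := {k | ∀ x : List α, x.length = k → x ∈ S∗}
  zero_mem' x hx := List.eq_nil_of_length_eq_zero hx ▸ nil_mem_kstar S
  add_mem' {p q} hp hq x hx := by
    rw [← List.take_append_drop p x, ← kstar_mul_kstar]
    exact append_mem_mul (hp _ (by simp; omega)) (hq _ (by simp; omega))

theorem mem_kstarFullLengths {k : ℕ} (h : ∀ x : List α, x.length = k → x ∈ S) :
    k ∈ kstarFullLengths S :=
  fun x hx => (le_kstar : S ≤ S∗) (h x hx)

theorem finite_setOf_notMem_kstar [Finite α] {n : ℕ}
    (hn : ∀ x : List α, x.length = n → x ∈ S) (hn_succ : ∀ x : List α, x.length = n + 1 → x ∈ S) :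
    {x | x ∉ S∗}.Finite := by
  have hclosure := AddSubmonoid.closure_le.2
    (Set.pair_subset (mem_kstarFullLengths hn) (mem_kstarFullLengths hn_succ))
  refine (List.finite_length_lt α (n * n)).subset fun x hx => ?_
  by_contra hshort
  exact hx (hclosure (Nat.mem_closure_pair_succ_of_mul_le (not_lt.1 hshort)) x rfl)

end Language

theorem ofFn_notMem_falsifyingWords {n : ℕ} {f : Fin n → Bool} {c : Clause n}
    (hf : SatisfiesClause f c) : List.ofFn f ∉ falsifyingWords c := by
  rintro ⟨_, hns⟩
  exact hns (by simpa using hf)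

/-- A 3SAT instance is satisfiable iff the star of
`S = (F_{c₁} ∪ ⋯ ∪ F_{c_m}) ∪ Bool^{n+1}` is not co-finite. -/
theorem sat_iff_star_not_cofinite {n m : ℕ} (hn : 1 ≤ n)
    (c : Fin m → Clause n)
    (S : Language Bool)
    (hS : S = ((⋃ i : Fin m, falsifyingWords (c i)) ∪
        {w | w.length = n + 1} : Set (List Bool))) :
    (∃ f : Fin n → Bool, ∀ i : Fin m, SatisfiesClause f (c i)) ↔
      ¬ {w : List Bool | w ∉ S∗}.Finite := by
  have hlen : ∀ y ∈ S, y.length = n ∨ y.length = n + 1 := by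
    rw [hS]
    rintro y (hy | hy)
    · obtain ⟨i, hi, -⟩ := Set.mem_iUnion.1 hy
      exact Or.inl hi
    · exact Or.inr hy
  constructor
  · rintro ⟨f, hf⟩
    refine Language.infinite_setOf_notMem_kstar hlen hn (List.length_ofFn (f := f)) ?_
    rw [hS]
    rintro (hw | hw)
    · obtain ⟨i, hi⟩ := Set.mem_iUnion.1 hw
      exact ofFn_notMem_falsifyingWords (hf i) hi
    · simp at hw
  · intro hinf
    contrapose! hinf
    refine Language.finite_setOf_notMem_kstar (n := n) (fun x hx => ?_) fun _ hx => hS ▸ Or.inr hx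
    obtain ⟨i, hi⟩ := hinf fun j => x.get (Fin.cast hx.symm j)
    exact hS ▸ Or.inl (Set.mem_iUnion.2 ⟨i, hx, hi⟩)
end
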